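/- arXiv:2010.16090 — 7 statements merged into one kernel-verified Lean document; each statement's English description precedes it below -/
import Mathlib

section
/- Let γ > 1 and v* > 0. There exist constants c₁ > 0 and c₂ > 0 such that for every w ∈ (0, 2v*): (i) Q(v|w) ≥ c₁ (v − w)² for all v with 0 < v ≤ 3v*; and (ii) Q(v|w) ≥ c₂ |v − w| for all v ≥ 3v*. -/
open MeasureTheory Real Set

/-- Pressure `p(v) = v^(-γ)`. -/
noncomputable def pres (γ v : ℝ) : ℝ := v ^ (-γ)

/-- Internal energy `Q(v) = v^(1-γ)/(γ-1)`. -/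
noncomputable def Qint (γ v : ℝ) : ℝ := v ^ (1 - γ) / (γ - 1)

/-- Relative internal energy `Q(v|w) = Q(v) - Q(w) - Q'(w)(v-w)`, with `Q'(w) = -p(w)`. -/
noncomputable def Qrel (γ v w : ℝ) : ℝ := Qint γ v - Qint γ w + pres γ w * (v - w)

/-!
On `(0, B]` the energy `Q` is strongly convex with modulus `γ B^(-γ-1) = min Q''`, so the
relative energy `Q(v|w)`, which is the Bregman divergence of `Q`, is bounded below by a multiple
of `(v - w)²`. For `v ≥ 3v*` and `w < 2v*` the slope `p(w) - p(v)` of `Q(·|w)` is at least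
`p(2v*) - p(3v*) > 0`, so `Q(·|w)` grows linearly from its value at `3v*`, which is itself
bounded below by the quadratic estimate.
-/

theorem ConvexOn.add_mul_sub_le_of_hasDerivAt {D : Set ℝ} {f : ℝ → ℝ} {f' x y : ℝ}
    (hf : ConvexOn ℝ D f) (hx : x ∈ D) (hy : y ∈ D) (hf' : HasDerivAt f f' x) :
    f x + f' * (y - x) ≤ f y := by
  rcases lt_trichotomy x y with hxy | rfl | hyx
  · have h := hf.le_slope_of_hasDerivAt hx hy hxy hf'
    rw [slope_def_field, le_div_iff₀ (sub_pos.2 hxy)] at h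
    linarith
  · simp
  · have h := hf.slope_le_of_hasDerivAt hy hx hyx hf'
    rw [slope_def_field, div_le_iff₀ (sub_pos.2 hyx)] at h
    linarith

theorem Convex.half_mul_sq_le_sub_sub_mul_of_hasDerivAt {D : Set ℝ} (hD : Convex ℝ D)
    {f f' : ℝ → ℝ} {m : ℝ} (hf : ∀ x ∈ D, HasDerivAt f (f' x) x)
    (hf' : ∀ x ∈ D, ∀ y ∈ D, x ≤ y → m * (y - x) ≤ f' y - f' x) {v w : ℝ}
    (hv : v ∈ D) (hw : w ∈ D) :
    m / 2 * (v - w) ^ 2 ≤ f v - f w - f' w * (v - w) := by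
  set g : ℝ → ℝ := fun x => f x - m / 2 * x ^ 2
  have hg : ∀ x ∈ D, HasDerivAt g (f' x - m * x) x := fun x hx =>
    ((hf x hx).sub ((hasDerivAt_pow 2 x).const_mul (m / 2))).congr_deriv (by ring)
  have hg_convex : ConvexOn ℝ D g := by
    refine MonotoneOn.convexOn_of_deriv hD
      (fun x hx => (hg x hx).continuousAt.continuousWithinAt)
      (fun x hx => (hg x (interior_subset hx)).differentiableAt.differentiableWithinAt) ?_
    intro x hx y hy hxy
    rw [(hg x (interior_subset hx)).deriv, (hg y (interior_subset hy)).deriv]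
    linarith [hf' x (interior_subset hx) y (interior_subset hy) hxy]
  have h := hg_convex.add_mul_sub_le_of_hasDerivAt hw hv (hg w hw)
  simp only [g] at h
  linarith

theorem hasDerivAt_pres (γ : ℝ) {v : ℝ} (hv : 0 < v) :
    HasDerivAt (pres γ) (-γ * v ^ (-γ - 1)) v :=
  (Real.hasDerivAt_rpow_const (p := -γ) (Or.inl hv.ne')).congr_deriv (by ring)

theorem hasDerivAt_Qint {γ : ℝ} (hγ : γ ≠ 1) {v : ℝ} (hv : 0 < v) :
    HasDerivAt (Qint γ) (-pres γ v) v := by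
  refine ((Real.hasDerivAt_rpow_const (p := 1 - γ) (Or.inl hv.ne')).div_const (γ - 1)).congr_deriv
    ?_
  rw [pres, show 1 - γ - 1 = -γ by ring]
  field_simp [sub_ne_zero.2 hγ]
  ring

theorem hasDerivAt_Qrel {γ : ℝ} (hγ : γ ≠ 1) (w : ℝ) {v : ℝ} (hv : 0 < v) :
    HasDerivAt (fun x => Qrel γ x w) (pres γ w - pres γ v) v :=
  (((hasDerivAt_Qint hγ hv).sub_const (Qint γ w)).add
    (((hasDerivAt_id v).sub_const w).const_mul (pres γ w))).congr_deriv (by ring)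

theorem pres_le_pres {γ : ℝ} (hγ : 0 ≤ γ) {x y : ℝ} (hx : 0 < x) (hxy : x ≤ y) :
    pres γ y ≤ pres γ x :=
  Real.rpow_le_rpow_of_nonpos hx hxy (neg_nonpos.2 hγ)

theorem mul_sub_le_pres_sub_pres {γ : ℝ} (hγ : 0 ≤ γ) {x y B : ℝ} (hx : 0 < x) (hxy : x ≤ y)
    (hyB : y ≤ B) : γ * B ^ (-γ - 1) * (y - x) ≤ pres γ x - pres γ y := by
  have hderiv : ∀ z ∈ Ioi (0 : ℝ), HasDerivAt (fun t => -pres γ t) (γ * z ^ (-γ - 1)) z :=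
    fun z hz => (hasDerivAt_pres γ hz).neg.congr_deriv (by ring)
  have h := (convex_Icc x B).mul_sub_le_image_sub_of_le_deriv (f := fun t => -pres γ t)
    (fun z hz => (hderiv z (hx.trans_le hz.1)).continuousAt.continuousWithinAt)
    (fun z hz => by
      rw [interior_Icc] at hz
      exact (hderiv z (hx.trans hz.1)).differentiableAt.differentiableWithinAt)
    (fun z hz => by
      rw [interior_Icc] at hz
      rw [(hderiv z (hx.trans hz.1)).deriv]
      exact mul_le_mul_of_nonneg_left
        (Real.rpow_le_rpow_of_nonpos (hx.trans hz.1) hz.2.le (by linarith)) hγ)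
    x (left_mem_Icc.2 (hxy.trans hyB)) y ⟨hxy, hyB⟩ hxy
  linarith

theorem mul_sq_le_Qrel {γ : ℝ} (hγ : 1 < γ) {v w B : ℝ} (hv : 0 < v) (hw : 0 < w)
    (hvB : v ≤ B) (hwB : w ≤ B) : γ * B ^ (-γ - 1) / 2 * (v - w) ^ 2 ≤ Qrel γ v w := by
  have h := (convex_Ioc 0 B).half_mul_sq_le_sub_sub_mul_of_hasDerivAt
    (f' := fun x => -pres γ x) (m := γ * B ^ (-γ - 1)) (fun x hx => hasDerivAt_Qint hγ.ne' hx.1)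
    (fun x hx y hy hxy => by
      linarith [mul_sub_le_pres_sub_pres (zero_le_one.trans hγ.le) hx.1 hxy hy.2])
    ⟨hv, hvB⟩ ⟨hw, hwB⟩
  rw [Qrel]
  linarith

theorem mul_sub_le_Qrel_sub_Qrel {γ : ℝ} (hγ : 1 < γ) {w a b : ℝ} (ha : 0 < a) (hab : a ≤ b) :
    (pres γ w - pres γ a) * (b - a) ≤ Qrel γ b w - Qrel γ a w := by
  have hderiv : ∀ x ∈ Ici a, HasDerivAt (fun x => Qrel γ x w) (pres γ w - pres γ x) x :=
    fun x hx => hasDerivAt_Qrel hγ.ne' w (ha.trans_le hx)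
  refine (convex_Ici a).mul_sub_le_image_sub_of_le_deriv
    (fun x hx => (hderiv x hx).continuousAt.continuousWithinAt)
    (fun x hx => (hderiv x (interior_subset hx)).differentiableAt.differentiableWithinAt)
    (fun x hx => ?_) a self_mem_Ici b hab hab
  rw [interior_Ici] at hx
  rw [(hderiv x (mem_Ici.2 hx.le)).deriv]
  linarith [pres_le_pres (zero_le_one.trans hγ.le) ha hx.le]

/-- Lemma A.1 (1): quadratic/linear lower bounds for the relative internal energy. -/
theorem relative_entropy_lower_bounds (γ vstar : ℝ) (hγ : 1 < γ) (hvstar : 0 < vstar) :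
    ∃ c₁ c₂ : ℝ, 0 < c₁ ∧ 0 < c₂ ∧
      ∀ w : ℝ, 0 < w → w < 2 * vstar →
        (∀ v : ℝ, 0 < v → v ≤ 3 * vstar → c₁ * (v - w) ^ 2 ≤ Qrel γ v w) ∧
        (∀ v : ℝ, 3 * vstar ≤ v → c₂ * |v - w| ≤ Qrel γ v w) := by
  have hB : 0 < 3 * vstar := by positivity
  set c₁ := γ * (3 * vstar) ^ (-γ - 1) / 2
  have hc₁ : 0 < c₁ := by have := Real.rpow_pos_of_pos hB (-γ - 1); positivity
  set d := pres γ (2 * vstar) - pres γ (3 * vstar)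
  have hd : 0 < d :=
    sub_pos.2 (Real.rpow_lt_rpow_of_neg (by positivity) (by linarith) (by linarith))
  set c₂ := min d (c₁ * vstar / 3)
  have hc₂ : 0 < c₂ := lt_min hd (by positivity)
  refine ⟨c₁, c₂, hc₁, hc₂,
    fun w hw hw2 => ⟨fun v hv hvB => mul_sq_le_Qrel hγ hv hw hvB (by linarith), fun v hvB => ?_⟩⟩
  have hslope : d ≤ pres γ w - pres γ (3 * vstar) := by
    linarith [pres_le_pres (zero_le_one.trans hγ.le) hw hw2.le]
  have hQB : c₁ * vstar ^ 2 ≤ Qrel γ (3 * vstar) w :=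
    calc c₁ * vstar ^ 2 ≤ c₁ * (3 * vstar - w) ^ 2 := by gcongr; linarith
      _ ≤ Qrel γ (3 * vstar) w := mul_sq_le_Qrel hγ hB hw le_rfl (by linarith)
  have hvB' : 0 ≤ v - 3 * vstar := sub_nonneg.2 hvB
  rw [abs_of_nonneg (by linarith)]
  calc c₂ * (v - w) ≤ d * (v - 3 * vstar) + c₁ * vstar ^ 2 := by
        nlinarith [min_le_left d (c₁ * vstar / 3), min_le_right d (c₁ * vstar / 3),
          mul_nonneg hc₂.le hw.le]
    _ ≤ (pres γ w - pres γ (3 * vstar)) * (v - 3 * vstar) + Qrel γ (3 * vstar) w :=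
        add_le_add (mul_le_mul_of_nonneg_right hslope hvB') hQB
    _ ≤ Qrel γ v w := by linarith [mul_sub_le_Qrel_sub_Qrel (w := w) hγ hB hvB]
end

section
/- Let γ > 1 and v* > 0. (i) If 0 < w ≤ u ≤ v or 0 < v ≤ u ≤ w, then Q(v|w) ≥ Q(u|w). (ii) For any δ* > 0 there exists a constant C > 0 such that, whenever in addition w ∈ (0, 2v*), |w − v*| ≤ δ*/2 and |w − u| > δ*, one has Q(v|w) − Q(u|w) ≥ C |u − v|. -/
open MeasureTheory Real Set

/-- Tangent line inequality for `t ↦ t^(-a)`, `a > 0` (convexity). -/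
lemma tangent_neg {a x y : ℝ} (ha : 0 < a) (hx : 0 < x) (hy : 0 < y) :
    x ^ (-a) - a * x ^ (-a - 1) * (y - x) ≤ y ^ (-a) := by
  have hX : (0:ℝ) < x ^ a := Real.rpow_pos_of_pos hx a
  have hY : (0:ℝ) < y ^ a := Real.rpow_pos_of_pos hy a
  have h1a : (0:ℝ) < 1 + a := by linarith
  -- weighted AM-GM
  have h := Real.geom_mean_le_arith_mean2_weighted
    (w₁ := 1/(1+a)) (w₂ := a/(1+a)) (p₁ := x^(a+1)) (p₂ := y^(a+1))
    (by positivity) (by positivity)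
    (Real.rpow_pos_of_pos hx _).le (Real.rpow_pos_of_pos hy _).le
    (by field_simp)
  have hx1 : (x^(a+1)) ^ (1/(1+a)) = x := by
    rw [← Real.rpow_mul hx.le, show (a+1)*(1/(1+a)) = 1 by field_simp; ring, Real.rpow_one]
  have hy1 : (y^(a+1)) ^ (a/(1+a)) = y ^ a := by
    rw [← Real.rpow_mul hy.le]
    congr 1
    field_simp
    ring
  rw [hx1, hy1] at h
  have hxa1 : x ^ (a+1) = x * x ^ a := by
    rw [Real.rpow_add hx, Real.rpow_one]; ring
  have hya1 : y ^ (a+1) = y * y ^ a := by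
    rw [Real.rpow_add hy, Real.rpow_one]; ring
  rw [hxa1, hya1] at h
  have key : (1+a) * (x * y^a) ≤ x * x^a + a * (y * y^a) := by
    have := mul_le_mul_of_nonneg_left h h1a.le
    calc (1+a) * (x * y^a) ≤ (1+a) * (1/(1+a) * (x * x^a) + a/(1+a) * (y * y^a)) := this
      _ = x * x^a + a * (y * y^a) := by field_simp
  rw [← sub_nonneg]
  have expand : y ^ (-a) - (x ^ (-a) - a * x ^ (-a-1) * (y - x)) =
      (x * x^a + a * (y * y^a) - (1+a) * (x * y^a)) / (x * x^a * y^a) := by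
    rw [Real.rpow_neg hy.le, Real.rpow_neg hx.le, show -a-1 = -(a+1) by ring,
      Real.rpow_neg hx.le, hxa1]
    field_simp
    ring
  rw [expand]
  exact div_nonneg (by linarith) (by positivity)

/-- Tangent line inequality for the internal energy: `Q(v) ≥ Q(u) - p(u)(v-u)`. -/
lemma Qtangent {γ u v : ℝ} (hγ : 1 < γ) (hu : 0 < u) (hv : 0 < v) :
    Qint γ u - pres γ u * (v - u) ≤ Qint γ v := by
  have ha : 0 < γ - 1 := by linarith
  have h := tangent_neg ha hu hv
  rw [show -(γ-1) = 1 - γ by ring, show (1:ℝ) - γ - 1 = -γ by ring] at h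
  unfold Qint pres
  rw [show u ^ (1-γ) / (γ-1) - u ^ (-γ) * (v - u) =
      (u ^ (1-γ) - (γ-1) * u ^ (-γ) * (v - u)) / (γ-1) from by field_simp]
  gcongr

/-- Key convexity estimate: `Q(v|w) - Q(u|w) ≥ (p(w) - p(u))(v - u)`. -/
lemma Qrel_key {γ u v w : ℝ} (hγ : 1 < γ) (hu : 0 < u) (hv : 0 < v) :
    (pres γ w - pres γ u) * (v - u) ≤ Qrel γ v w - Qrel γ u w := by
  have h := Qtangent hγ hu hv
  unfold Qrel
  nlinarith [h]

/-- Lemma A.1 (2): monotonicity of the relative internal energy along orderings, and a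
linear gain under separation. -/
theorem relative_entropy_monotonicity (γ vstar : ℝ) (hγ : 1 < γ) (hvstar : 0 < vstar) :
    (∀ v u w : ℝ,
        ((0 < w ∧ w ≤ u ∧ u ≤ v) ∨ (0 < v ∧ v ≤ u ∧ u ≤ w)) →
        Qrel γ u w ≤ Qrel γ v w) ∧
    (∀ δstar : ℝ, 0 < δstar → ∃ C : ℝ, 0 < C ∧
      ∀ v u w : ℝ,
        ((0 < w ∧ w ≤ u ∧ u ≤ v) ∨ (0 < v ∧ v ≤ u ∧ u ≤ w)) →
        0 < w → w < 2 * vstar →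
        |w - vstar| ≤ δstar / 2 → δstar < |w - u| →
        C * |u - v| ≤ Qrel γ v w - Qrel γ u w) := by
  have hγ0 : (0:ℝ) < γ := by linarith
  constructor
  · rintro v u w (⟨hw, hwu, huv⟩ | ⟨hv, hvu, huw⟩)
    · have hu : 0 < u := lt_of_lt_of_le hw hwu
      have hv : 0 < v := lt_of_lt_of_le hu huv
      have hp : pres γ u ≤ pres γ w :=
        Real.rpow_le_rpow_of_nonpos hw hwu (by linarith)
      have h := Qrel_key (u := u) (v := v) (w := w) hγ hu hv
      nlinarith [h]
    · have hu : 0 < u := lt_of_lt_of_le hv hvu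
      have hw : 0 < w := lt_of_lt_of_le hu huw
      have hp : pres γ w ≤ pres γ u :=
        Real.rpow_le_rpow_of_nonpos hu huw (by linarith)
      have h := Qrel_key (u := u) (v := v) (w := w) hγ hu hv
      nlinarith [h]
  · intro δstar hδ
    set M : ℝ := 2 * vstar + δstar with hM
    have hMpos : 0 < M := by positivity
    refine ⟨γ * δstar * M ^ (-γ - 1), by positivity, ?_⟩
    rintro v u w (⟨hw, hwu, huv⟩ | ⟨hv, hvu, huw⟩) hw' hw2 hwv hsep
    · -- w ≤ u ≤ v, u > w + δstar
      have hu : 0 < u := lt_of_lt_of_le hw hwu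
      have hv : 0 < v := lt_of_lt_of_le hu huv
      have habs : |w - u| = u - w := by rw [abs_sub_comm]; exact abs_of_nonneg (by linarith)
      have huw : w + δstar < u := by rw [habs] at hsep; linarith
      have hwd : 0 < w + δstar := by linarith
      -- p(u) ≤ p(w+δstar)
      have hp1 : pres γ u ≤ (w + δstar) ^ (-γ) :=
        Real.rpow_le_rpow_of_nonpos hwd huw.le (by linarith)
      -- p(w) - p(w+δstar) ≥ γ δstar (w+δstar)^(-γ-1)
      have hp2 := tangent_neg hγ0 hwd hw
      -- (w+δstar)^(-γ-1) ≥ M^(-γ-1)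
      have hp3 : M ^ (-γ - 1) ≤ (w + δstar) ^ (-γ - 1) :=
        Real.rpow_le_rpow_of_nonpos hwd (by simp only [hM]; linarith) (by linarith)
      have hC : γ * δstar * M ^ (-γ - 1) ≤ pres γ w - pres γ u := by
        have : γ * (w + δstar) ^ (-γ - 1) * (w - (w + δstar)) = -(γ * δstar * (w + δstar) ^ (-γ-1)) := by ring
        unfold pres
        rw [this] at hp2
        have h3 := mul_le_mul_of_nonneg_left hp3 (by positivity : (0:ℝ) ≤ γ * δstar)
        unfold pres at hp1
        nlinarith [hp2, h3, hp1]
      have h := Qrel_key (u := u) (v := v) (w := w) hγ hu hv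
      have habs2 : |u - v| = v - u := by rw [abs_sub_comm]; exact abs_of_nonneg (by linarith)
      rw [habs2]
      nlinarith [h, hC, mul_le_mul_of_nonneg_right hC (by linarith : (0:ℝ) ≤ v - u)]
    · -- v ≤ u ≤ w, u < w - δstar
      have hu : 0 < u := lt_of_lt_of_le hv hvu
      have habs : |w - u| = w - u := abs_of_nonneg (by linarith)
      have huw' : u < w - δstar := by rw [habs] at hsep; linarith
      have hwd : 0 < w - δstar := lt_trans hu huw'
      -- p(u) ≥ p(w - δstar)
      have hp1 : (w - δstar) ^ (-γ) ≤ pres γ u :=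
        Real.rpow_le_rpow_of_nonpos hu huw'.le (by linarith)
      -- p(w-δstar) - p(w) ≥ γ δstar w^(-γ-1)
      have hp2 := tangent_neg hγ0 hw' hwd
      have hp3 : M ^ (-γ - 1) ≤ w ^ (-γ - 1) :=
        Real.rpow_le_rpow_of_nonpos hw' (by simp only [hM]; linarith) (by linarith)
      have hC : γ * δstar * M ^ (-γ - 1) ≤ pres γ u - pres γ w := by
        have : γ * w ^ (-γ - 1) * ((w - δstar) - w) = -(γ * δstar * w ^ (-γ-1)) := by ring
        unfold pres
        rw [this] at hp2
        have h3 := mul_le_mul_of_nonneg_left hp3 (by positivity : (0:ℝ) ≤ γ * δstar)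
        unfold pres at hp1
        nlinarith [hp2, h3, hp1]
      have h := Qrel_key (u := u) (v := v) (w := w) hγ hu hv
      have habs2 : |u - v| = u - v := abs_of_nonneg (by linarith)
      rw [habs2]
      nlinarith [h, hC, mul_le_mul_of_nonneg_right hC (by linarith : (0:ℝ) ≤ u - v)]
end

section
/- Let γ > 1 and v* > 0. There exist constants C > 0 and δ* > 0 such that for any δ ∈ (0, δ*) and any v, w > 0 satisfying |p(v) − p(w)| < δ and |p(w) − p(v*)| < δ, one has p(v|w) ≤ ( (γ+1)/(2γ) · 1/p(w) + C δ ) (p(v) − p(w))². -/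
/-!
Write `q = p(v)`, `r = p(w)` and let `φ x = x ^ (-1/γ)` be the inverse of `p`. Since
`p'(w) = 1 / φ'(r)`, the relative pressure is `p(v|w) = γ r^(1 + 1/γ) φ(q|r)`, and Taylor's
theorem with Lagrange remainder bounds `φ(q|r)` by `φ''(m) (q - r)² / 2` for any
`0 < m ≤ min q r`, because `φ''` is decreasing. For `m = r` this gives exactly the sharp
coefficient `(γ + 1) / (2γ r)`. We take `m = r - δ` instead, which only costs a factor
`(r / (r - δ))^(2 + 1/γ) = 1 + O(δ)`, uniformly as long as `r` stays close to `p(v*)`.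
-/

open MeasureTheory Real Set

/-- Relative pressure `p(v|w) = p(v) - p(w) - p'(w)(v-w)`, with `p'(w) = -γ w^(-γ-1)`. -/
noncomputable def prel (γ v w : ℝ) : ℝ := pres γ v - pres γ w + γ * w ^ (-γ - 1) * (v - w)

theorem sub_sub_deriv_mul_le_of_iteratedDeriv_two_le {f : ℝ → ℝ} {x₀ x M : ℝ}
    (hf : ∀ y ∈ uIcc x₀ x, ContDiffAt ℝ 2 f y)
    (hM : ∀ ξ ∈ uIoo x₀ x, iteratedDeriv 2 f ξ ≤ M) :
    f x - f x₀ - deriv f x₀ * (x - x₀) ≤ M / 2 * (x - x₀) ^ 2 := by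
  rcases eq_or_ne x₀ x with rfl | hx
  · simp
  obtain ⟨ξ, hξ, htaylor⟩ := taylor_mean_remainder_lagrange_iteratedDeriv (n := 1) hx
    fun y hy ↦ (hf y hy).contDiffWithinAt
  have hderiv : derivWithin f (uIcc x₀ x) x₀ = deriv f x₀ :=
    ((hf x₀ left_mem_uIcc).differentiableAt two_ne_zero).derivWithin
      (uniqueDiffOn_uIcc hx x₀ left_mem_uIcc)
  norm_num [taylorWithinEval_succ, taylor_within_zero_eval, iteratedDerivWithin_one, hderiv]
    at htaylor
  calc f x - f x₀ - deriv f x₀ * (x - x₀) = iteratedDeriv 2 f ξ / 2 * (x - x₀) ^ 2 := by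
        linarith
    _ ≤ M / 2 * (x - x₀) ^ 2 := by gcongr; exact hM ξ hξ

theorem iteratedDeriv_two_rpow_const (p x : ℝ) :
    iteratedDeriv 2 (fun x : ℝ ↦ x ^ p) x = p * (p - 1) * x ^ (p - 2) := by
  simp only [iteratedDeriv_succ, iteratedDeriv_zero, deriv_rpow_const', deriv_const_mul_field']
  ring_nf

theorem rpow_sub_rpow_sub_deriv_mul_le {p x₀ x m : ℝ} (hp : p ≤ 0) (hm : 0 < m)
    (hmx₀ : m ≤ x₀) (hmx : m ≤ x) :
    x ^ p - x₀ ^ p - p * x₀ ^ (p - 1) * (x - x₀) ≤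
      p * (p - 1) / 2 * m ^ (p - 2) * (x - x₀) ^ 2 := by
  have hmem : ∀ y ∈ uIcc x₀ x, m ≤ y := fun y hy ↦ (le_min hmx₀ hmx).trans hy.1
  have key := sub_sub_deriv_mul_le_of_iteratedDeriv_two_le (f := fun y ↦ y ^ p)
    (M := p * (p - 1) * m ^ (p - 2))
    (fun y hy ↦ contDiffAt_rpow_const_of_ne (hm.trans_le (hmem y hy)).ne')
    (fun ξ hξ ↦ by
      rw [iteratedDeriv_two_rpow_const]
      exact mul_le_mul_of_nonneg_left
        (rpow_le_rpow_of_nonpos hm (hmem ξ (uIoo_subset_uIcc_self hξ)) (by linarith))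
        (by nlinarith))
  rw [Real.deriv_rpow_const] at key
  linarith

theorem pres_pos {γ v : ℝ} (hv : 0 < v) : 0 < pres γ v := rpow_pos_of_pos hv _

theorem pres_rpow {γ v : ℝ} (hv : 0 < v) (s : ℝ) : pres γ v ^ s = v ^ (-γ * s) := by
  rw [pres, ← rpow_mul hv.le]

theorem prel_eq_mul_relative_rpow {γ v w : ℝ} (hγ : γ ≠ 0) (hv : 0 < v) (hw : 0 < w) :
    prel γ v w = γ * pres γ w ^ (1 + γ⁻¹) *
      (pres γ v ^ (-γ⁻¹) - pres γ w ^ (-γ⁻¹) -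
        -γ⁻¹ * pres γ w ^ (-γ⁻¹ - 1) * (pres γ v - pres γ w)) := by
  have hv' : pres γ v ^ (-γ⁻¹) = v := by rw [pres_rpow hv]; field_simp; simp
  have hw' : pres γ w ^ (-γ⁻¹) = w := by rw [pres_rpow hw]; field_simp; simp
  have hw'' : pres γ w ^ (1 + γ⁻¹) = w ^ (-γ - 1) := by rw [pres_rpow hw]; field_simp; ring_nf
  have hinv : pres γ w ^ (1 + γ⁻¹) * pres γ w ^ (-γ⁻¹ - 1) = 1 := by
    rw [← rpow_add (pres_pos hw), show 1 + γ⁻¹ + (-γ⁻¹ - 1) = 0 by ring, rpow_zero]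
  rw [prel, hv', hw', ← hw'']
  linear_combination (pres γ w - pres γ v) * mul_inv_cancel₀ hγ +
    (pres γ w - pres γ v) * γ * γ⁻¹ * hinv

theorem prel_le_mul_sq_of_le {γ v w m : ℝ} (hγ : 0 < γ) (hv : 0 < v) (hw : 0 < w)
    (hm : 0 < m) (hmv : m ≤ pres γ v) (hmw : m ≤ pres γ w) :
    prel γ v w ≤ (γ + 1) / (2 * γ) * (pres γ w ^ (1 + γ⁻¹) * m ^ (-γ⁻¹ - 2)) *
      (pres γ v - pres γ w) ^ 2 := by
  have key := rpow_sub_rpow_sub_deriv_mul_le (p := -γ⁻¹) (by simp [hγ.le]) hm hmw hmv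
  rw [prel_eq_mul_relative_rpow hγ.ne' hv hw]
  calc _ ≤ γ * pres γ w ^ (1 + γ⁻¹) * (-γ⁻¹ * (-γ⁻¹ - 1) / 2 * m ^ (-γ⁻¹ - 2) *
        (pres γ v - pres γ w) ^ 2) := by
        have := pres_pos (γ := γ) hw
        gcongr
    _ = _ := by field_simp; ring

theorem rpow_le_one_add_five_mul {s e : ℝ} (hs : 1 ≤ s) (hs' : s ≤ 3 / 2) (he : e ≤ 3) :
    s ^ e ≤ 1 + 5 * (s - 1) := by
  calc s ^ e ≤ s ^ (3 : ℝ) := rpow_le_rpow_of_exponent_le hs he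
    _ = s ^ 3 := by norm_cast
    _ ≤ 1 + 5 * (s - 1) := by nlinarith [mul_nonneg (sub_nonneg.2 hs) (sub_nonneg.2 hs')]

theorem rpow_one_add_mul_rpow_le {a r t : ℝ} (ha : a ≤ 1) (ht : 0 < t) (htr : t ≤ r)
    (hrt : r ≤ 3 / 2 * t) :
    r ^ (1 + a) * t ^ (-a - 2) ≤ 1 / r + 5 * (r - t) / (r * t) := by
  have hr := ht.trans_le htr
  have hratio : r ^ (1 + a) * t ^ (-a - 2) = (r / t) ^ (a + 2) / r := by
    rw [div_rpow hr.le ht.le, show -a - 2 = -(a + 2) by ring, rpow_neg ht.le,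
      show a + 2 = 1 + a + 1 by ring, rpow_add_one hr.ne']
    field_simp
  have hs := rpow_le_one_add_five_mul (e := a + 2) ((one_le_div ht).2 htr)
    ((div_le_iff₀ ht).2 hrt) (by linarith)
  rw [hratio]
  calc (r / t) ^ (a + 2) / r ≤ (1 + 5 * (r / t - 1)) / r := by gcongr
    _ = _ := by field_simp

theorem mul_rpow_one_add_mul_rpow_sub_le {γ r δ P : ℝ} (hγ : 1 ≤ γ) (hδ : 0 < δ)
    (hδP : δ < P / 4) (hr : P / 2 < r - δ) :
    (γ + 1) / (2 * γ) * (r ^ (1 + γ⁻¹) * (r - δ) ^ (-γ⁻¹ - 2)) ≤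
      (γ + 1) / (2 * γ) * (1 / r) + 20 / P ^ 2 * δ := by
  have hk : (γ + 1) / (2 * γ) ≤ 1 := by rw [div_le_one (by positivity)]; linarith
  have hrδ : P ^ 2 / 4 ≤ r * (r - δ) := by nlinarith
  have hratio : r ^ (1 + γ⁻¹) * (r - δ) ^ (-γ⁻¹ - 2) ≤ 1 / r + 5 * δ / (r * (r - δ)) := by
    simpa using rpow_one_add_mul_rpow_le (r := r) (t := r - δ) (inv_le_one_of_one_le₀ hγ)
      (by linarith) (by linarith) (by linarith)
  calc _ ≤ (γ + 1) / (2 * γ) * (1 / r + 5 * δ / (r * (r - δ))) := by gcongr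
    _ ≤ (γ + 1) / (2 * γ) * (1 / r) + 5 * δ / (P ^ 2 / 4) := by
      rw [mul_add]
      gcongr
      exact (mul_le_of_le_one_left (div_nonneg (by positivity) (by nlinarith)) hk).trans
        (by gcongr; nlinarith)
    _ = (γ + 1) / (2 * γ) * (1 / r) + 20 / P ^ 2 * δ := by field_simp; ring

/-- Lemma A.3 (estimate (A.5)): sharp local quadratic bound for the relative pressure. -/
theorem relative_pressure_local_bound (γ vstar : ℝ) (hγ : 1 < γ) (hvstar : 0 < vstar) :
    ∃ C δstar : ℝ, 0 < C ∧ 0 < δstar ∧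
      ∀ δ : ℝ, 0 < δ → δ < δstar →
      ∀ v w : ℝ, 0 < v → 0 < w →
        |pres γ v - pres γ w| < δ → |pres γ w - pres γ vstar| < δ →
        prel γ v w ≤ ((γ + 1) / (2 * γ) * (1 / pres γ w) + C * δ) *
          (pres γ v - pres γ w) ^ 2 := by
  set P := pres γ vstar
  have hP : 0 < P := pres_pos hvstar
  refine ⟨20 / P ^ 2, P / 4, by positivity, by positivity, ?_⟩
  intro δ hδ hδP v w hv hw hvw hwP
  obtain ⟨hvw, -⟩ := abs_lt.1 hvw
  obtain ⟨hwP, -⟩ := abs_lt.1 hwP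
  have hm : P / 2 < pres γ w - δ := by linarith
  calc prel γ v w ≤ (γ + 1) / (2 * γ) * (pres γ w ^ (1 + γ⁻¹) * (pres γ w - δ) ^ (-γ⁻¹ - 2)) *
        (pres γ v - pres γ w) ^ 2 :=
        prel_le_mul_sq_of_le (by linarith) hv hw (by linarith) (by linarith) (by linarith)
    _ ≤ _ := by gcongr; exact mul_rpow_one_add_mul_rpow_sub_le hγ.le hδ hδP hm
end

section
/- Let γ > 1 and v* > 0. There exist constants C > 0 and δ* > 0 such that for any δ ∈ (0, δ*) and any v, w > 0 satisfying |p(v) − p(w)| < δ and |p(w) − p(v*)| < δ, one has both Q(v|w) ≥ (p(w)^(−1/γ−1)/(2γ)) (p(v) − p(w))² − ((1+γ)/(3γ²)) p(w)^(−1/γ−2) (p(v) − p(w))³ and Q(v|w) ≤ ( p(w)^(−1/γ−1)/(2γ) + C δ ) (p(v) − p(w))². -/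
/-!
With `x = p(v)` and `q = p(w)` (so that `v = x^(-1/γ)`), `Q(v|w) = P(x) - P(q)` where
`P(x) = x^(1-1/γ)/(γ-1) + q x^(-1/γ)` has derivative `x^(-1/γ-1) (x - q) / γ`. In both estimates the
difference of the two sides then has a derivative with the sign of `x - q`, so it is minimal at
`x = q`, where it vanishes. For the lower bound the sign comes from the tangent-line inequality of
the convex function `t ↦ t^(-1/γ-1)`, which holds on all of `(0, ∞)`; for the upper bound it comes
from the Lipschitz bound of that function on `[p(v*)/2, ∞)`, an interval containing `(p(w) - δ, ∞)`
once `δ < p(v*)/4`.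
-/

open MeasureTheory Real Set

theorem isMinOn_of_sub_mul_deriv_nonneg {f f' : ℝ → ℝ} {s : Set ℝ} [hs : s.OrdConnected] {q : ℝ}
    (hq : q ∈ s) (hf : ∀ y ∈ s, HasDerivAt f (f' y) y)
    (hsign : ∀ y ∈ s, 0 ≤ (y - q) * f' y) : IsMinOn f s q := by
  refine isMinOn_iff.2 fun x hx => ?_
  have hmvt : ∀ {a b}, a ∈ s → b ∈ s → a < b →
      ∃ c ∈ s, a < c ∧ c < b ∧ f b - f a = f' c * (b - a) := by
    intro a b ha hb hab
    have hsub : Icc a b ⊆ s := hs.out ha hb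
    obtain ⟨c, hc, hslope⟩ := exists_hasDerivAt_eq_slope f f' hab
      (fun y hy => (hf y (hsub hy)).continuousAt.continuousWithinAt)
      (fun y hy => hf y (hsub (Ioo_subset_Icc_self hy)))
    refine ⟨c, hsub (Ioo_subset_Icc_self hc), hc.1, hc.2, ?_⟩
    rw [hslope, div_mul_cancel₀ _ (sub_pos.2 hab).ne']
  rcases lt_trichotomy x q with hxq | rfl | hqx
  · obtain ⟨c, hc, hxc, hcq, hfc⟩ := hmvt hx hq hxq
    nlinarith [hsign c hc]
  · exact le_rfl
  · obtain ⟨c, hc, hqc, hcx, hfc⟩ := hmvt hq hx hqx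
    nlinarith [hsign c hc]

theorem rpow_tangent_le_of_nonpos {e s t : ℝ} (he : e ≤ 0) (hs : 0 < s) (ht : 0 < t) :
    s ^ e + e * s ^ (e - 1) * (t - s) ≤ t ^ e := by
  have hmin : IsMinOn (fun y => y ^ e - e * s ^ (e - 1) * (y - s)) (Ioi 0) s := by
    refine isMinOn_of_sub_mul_deriv_nonneg (f' := fun y => e * y ^ (e - 1) - e * s ^ (e - 1))
      hs (fun y (hy : 0 < y) => ?_) (fun y (hy : 0 < y) => ?_)
    · exact ((hasDerivAt_rpow_const (Or.inl hy.ne')).sub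
        (((hasDerivAt_id y).sub_const s).const_mul _)).congr_deriv (by simp)
    · have he1 : e - 1 ≤ 0 := by linarith
      rcases le_total y s with hys | hsy
      · have := rpow_le_rpow_of_nonpos hy hys he1
        nlinarith [mul_nonneg (mul_nonneg (neg_nonneg.2 he) (sub_nonneg.2 hys)) (sub_nonneg.2 this)]
      · have := rpow_le_rpow_of_nonpos hs hsy he1
        nlinarith [mul_nonneg (mul_nonneg (neg_nonneg.2 he) (sub_nonneg.2 hsy)) (sub_nonneg.2 this)]
  linarith [isMinOn_iff.1 hmin t ht]

theorem rpow_sub_rpow_le_of_sub_le {e ℓ y q δ : ℝ} (he : e ≤ 0) (hℓ : 0 < ℓ) (hℓy : ℓ ≤ y)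
    (hq : 0 < q) (hδ : 0 ≤ δ) (hqy : q - y ≤ δ) : y ^ e - q ^ e ≤ -e * ℓ ^ (e - 1) * δ := by
  have htangent := rpow_tangent_le_of_nonpos he (hℓ.trans_le hℓy) hq
  have hmono : y ^ (e - 1) ≤ ℓ ^ (e - 1) := rpow_le_rpow_of_nonpos hℓ hℓy (by linarith)
  have hbound : y ^ (e - 1) * (q - y) ≤ ℓ ^ (e - 1) * δ := by
    rcases le_total (q - y) 0 with hneg | hpos
    · have := mul_nonpos_of_nonneg_of_nonpos (rpow_nonneg (hℓ.trans_le hℓy).le (e - 1)) hneg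
      have := mul_nonneg (rpow_nonneg hℓ.le (e - 1)) hδ
      linarith
    · exact mul_le_mul hmono hqy hpos (rpow_nonneg hℓ.le _)
  nlinarith [mul_le_mul_of_nonneg_left hbound (neg_nonneg.2 he)]

noncomputable def pressurePotential (γ q x : ℝ) : ℝ := x ^ (1 - 1 / γ) / (γ - 1) + q * x ^ (-1 / γ)

theorem Qrel_eq_pressurePotential_sub {γ v w : ℝ} (hγ : γ ≠ 0) (hv : 0 < v) (hw : 0 < w) :
    Qrel γ v w = pressurePotential γ (pres γ w) (pres γ v)
      - pressurePotential γ (pres γ w) (pres γ w) := by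
  have hpow : ∀ {u : ℝ}, 0 < u → ∀ r : ℝ, pres γ u ^ r = u ^ (-γ * r) := fun hu r =>
    (rpow_mul hu.le _ _).symm
  have h1 : -γ * (1 - 1 / γ) = 1 - γ := by field_simp; ring
  have h2 : -γ * (-1 / γ) = 1 := by field_simp
  simp only [pressurePotential, hpow hv, hpow hw, h1, h2, rpow_one, Qrel, Qint]
  ring

theorem hasDerivAt_pressurePotential {γ q x : ℝ} (hγ : γ ≠ 0) (hγ1 : γ ≠ 1) (hx : 0 < x) :
    HasDerivAt (pressurePotential γ q) (x ^ (-1 / γ - 1) * (x - q) / γ) x := by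
  have hγ1' : γ - 1 ≠ 0 := sub_ne_zero.2 hγ1
  refine (((hasDerivAt_rpow_const (p := 1 - 1 / γ) (Or.inl hx.ne')).div_const (γ - 1)).add
    ((hasDerivAt_rpow_const (p := -1 / γ) (Or.inl hx.ne')).const_mul q)).congr_deriv ?_
  rw [show 1 - 1 / γ - 1 = (-1 / γ - 1) + 1 by ring, rpow_add_one hx.ne']
  field_simp
  ring

theorem pressurePotential_sub_ge {γ q x : ℝ} (hγ : 0 < γ) (hγ1 : γ ≠ 1) (hq : 0 < q) (hx : 0 < x) :
    q ^ (-1 / γ - 1) / (2 * γ) * (x - q) ^ 2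
        - (1 + γ) / (3 * γ ^ 2) * q ^ (-1 / γ - 2) * (x - q) ^ 3
      ≤ pressurePotential γ q x - pressurePotential γ q q := by
  have he : -1 / γ - 1 ≤ 0 := by rw [neg_div]; linarith [one_div_pos.2 hγ]
  have hmin : IsMinOn (fun y => pressurePotential γ q y - (q ^ (-1 / γ - 1) / (2 * γ) * (y - q) ^ 2
      - (1 + γ) / (3 * γ ^ 2) * q ^ (-1 / γ - 2) * (y - q) ^ 3)) (Ioi 0) q := by
    refine isMinOn_of_sub_mul_deriv_nonneg (f' := fun y => y ^ (-1 / γ - 1) * (y - q) / γ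
      - (q ^ (-1 / γ - 1) / (2 * γ) * (2 * (y - q))
        - (1 + γ) / (3 * γ ^ 2) * q ^ (-1 / γ - 2) * (3 * (y - q) ^ 2))) hq
      (fun y hy => ?_) (fun y hy => ?_)
    · have hid := (hasDerivAt_id y).sub_const q
      exact ((hasDerivAt_pressurePotential hγ.ne' hγ1 hy).sub
        (((hid.pow 2).const_mul _).sub ((hid.pow 3).const_mul _))).congr_deriv (by simp)
    · have htangent := rpow_tangent_le_of_nonpos he hq hy
      rw [show -1 / γ - 1 - 1 = -1 / γ - 2 by ring] at htangent
      refine (mul_nonneg (div_nonneg (sq_nonneg (y - q)) hγ.le) (sub_nonneg.2 htangent)).trans_eq ?_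
      field_simp
      ring
  linarith [isMinOn_iff.1 hmin x hx]

theorem pressurePotential_sub_le {γ q x ℓ δ : ℝ} (hγ : 0 < γ) (hγ1 : γ ≠ 1) (hℓ : 0 < ℓ)
    (hδ : 0 < δ) (hℓq : ℓ ≤ q - δ) (hx : q - δ < x) :
    pressurePotential γ q x - pressurePotential γ q q
      ≤ (q ^ (-1 / γ - 1) / (2 * γ) + (1 + γ) / (2 * γ ^ 2) * ℓ ^ (-1 / γ - 2) * δ)
        * (x - q) ^ 2 := by
  have he : -1 / γ - 1 ≤ 0 := by rw [neg_div]; linarith [one_div_pos.2 hγ]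
  set K := q ^ (-1 / γ - 1) / (2 * γ) + (1 + γ) / (2 * γ ^ 2) * ℓ ^ (-1 / γ - 2) * δ
  have hmin : IsMinOn
      (fun y => K * (y - q) ^ 2 - (pressurePotential γ q y - pressurePotential γ q q))
      (Ioi (q - δ)) q := by
    refine isMinOn_of_sub_mul_deriv_nonneg (f' := fun y => K * (2 * (y - q))
      - y ^ (-1 / γ - 1) * (y - q) / γ) (by simpa using hδ)
      (fun y (hy : q - δ < y) => ?_) (fun y (hy : q - δ < y) => ?_)
    · have hy0 : 0 < y := by linarith
      exact (((((hasDerivAt_id y).sub_const q).pow 2).const_mul K).sub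
        ((hasDerivAt_pressurePotential hγ.ne' hγ1 hy0).sub_const _)).congr_deriv (by simp)
    · have hlip := rpow_sub_rpow_le_of_sub_le (y := y) (q := q) he hℓ (by linarith)
        (by linarith) hδ.le (by linarith)
      rw [show -1 / γ - 1 - 1 = -1 / γ - 2 by ring] at hlip
      refine (mul_nonneg (div_nonneg (sq_nonneg (y - q)) hγ.le) (sub_nonneg.2 hlip)).trans_eq ?_
      simp only [K]
      field_simp
      ring
  linarith [isMinOn_iff.1 hmin x hx]

/-- Lemma A.3 (estimates (A.6) and (A.7)): two-sided local bounds for the relative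
internal energy in terms of the pressure difference. -/
theorem relative_entropy_local_bounds (γ vstar : ℝ) (hγ : 1 < γ) (hvstar : 0 < vstar) :
    ∃ C δstar : ℝ, 0 < C ∧ 0 < δstar ∧
      ∀ δ : ℝ, 0 < δ → δ < δstar →
      ∀ v w : ℝ, 0 < v → 0 < w →
        |pres γ v - pres γ w| < δ → |pres γ w - pres γ vstar| < δ →
        ((pres γ w) ^ (-1/γ - 1) / (2 * γ) * (pres γ v - pres γ w) ^ 2
            - (1 + γ) / (3 * γ ^ 2) * (pres γ w) ^ (-1/γ - 2) * (pres γ v - pres γ w) ^ 3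
          ≤ Qrel γ v w) ∧
        Qrel γ v w ≤ ((pres γ w) ^ (-1/γ - 1) / (2 * γ) + C * δ) *
          (pres γ v - pres γ w) ^ 2 := by
  have hγ0 : 0 < γ := by linarith
  have hpres : ∀ {u : ℝ}, 0 < u → 0 < pres γ u := fun hu => rpow_pos_of_pos hu _
  have hstar := hpres hvstar
  refine ⟨(1 + γ) / (2 * γ ^ 2) * (pres γ vstar / 2) ^ (-1 / γ - 2), pres γ vstar / 4,
    by positivity, by positivity, fun δ hδ hδstar v w hv hw hvw hwstar => ?_⟩
  rw [abs_lt] at hvw hwstar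
  rw [Qrel_eq_pressurePotential_sub hγ0.ne' hv hw]
  exact ⟨pressurePotential_sub_ge hγ0 hγ.ne' (hpres hw) (hpres hv),
    pressurePotential_sub_le hγ0 hγ.ne' (by positivity) hδ (by linarith) (by linarith)⟩
end

section
/- Let γ > 1. For any r > 0 there exist ε₀ > 0 and C > 0 such that the following holds: for all p₋, p₊, q > 0 with p₋ ∈ (r/2, 2r), ε := p₊ − p₋ ∈ (0, ε₀), and p₋ < q < p₊, setting v := q^(−1/γ), v₋ := p₋^(−1/γ), v₊ := p₊^(−1/γ) (so that p(v) = q, p(v₋) = p₋, p(v₊) = p₊), one has | (v − v₋)/(q − p₋) + (v − v₊)/(p₊ − q) + (1/2)·(p''(v₋)/p'(v₋)²)·(v₋ − v₊) | ≤ C ε². -/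
open MeasureTheory Real Set

private lemma alg_key (X Y F F1 F2 κ q pm pp : ℝ) (hd : q - pm ≠ 0) (hd2 : pp - q ≠ 0)
    (hk : κ * F1 = -F2) :
    (X - F)/(q-pm) + (X - Y)/(pp-q) + (1/2)*κ*(F - Y)
      = (X - F - F1*(q-pm) - F2/2*(q-pm)^2)/(q-pm)
        - ((Y - F - F1*(pp-pm) - F2/2*(pp-pm)^2) - (X - F - F1*(q-pm) - F2/2*(q-pm)^2))/(pp-q)
        - (1/4)*κ*F2*(pp-pm)^2
        - (1/2)*κ*(Y - F - F1*(pp-pm) - F2/2*(pp-pm)^2) := by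
  have hF2 : F2 = -(κ * F1) := by linarith
  subst hF2
  field_simp
  ring

private lemma mvt_abs {s : Set ℝ} (hs : Convex ℝ s) {f f' : ℝ → ℝ} {C : ℝ}
    (hd : ∀ x ∈ s, HasDerivWithinAt f (f' x) s x)
    (hb : ∀ x ∈ s, |f' x| ≤ C) {x y : ℝ} (hx : x ∈ s) (hy : y ∈ s) :
    |f y - f x| ≤ C * |y - x| := by
  simpa [Real.norm_eq_abs] using
    Convex.norm_image_sub_le_of_norm_hasDerivWithin_le hd
      (by simpa [Real.norm_eq_abs] using hb) hs hx hy

private lemma hasDerivAt_cpow (c e : ℝ) {x : ℝ} (hx : 0 < x) :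
    HasDerivAt (fun t : ℝ => c * t ^ e) (c * e * x ^ (e - 1)) x := by
  simpa [mul_assoc] using (Real.hasDerivAt_rpow_const (p := e) (Or.inl hx.ne')).const_mul c

set_option maxHeartbeats 1000000 in
/-- Lemma A.4: an estimate on the inverse of the pressure function `p(v) = v^(-γ)`,
whose inverse is `q ↦ q^(-1/γ)`; here `p'(v) = -γ v^(-γ-1)` and
`p''(v) = γ(γ+1) v^(-γ-2)`. -/
theorem inverse_pressure_estimate (γ : ℝ) (hγ : 1 < γ) :
    ∀ r : ℝ, 0 < r → ∃ ε₀ C : ℝ, 0 < ε₀ ∧ 0 < C ∧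
      ∀ pm pp q : ℝ, 0 < pm → 0 < pp → 0 < q →
        r / 2 < pm → pm < 2 * r →
        0 < pp - pm → pp - pm < ε₀ →
        pm < q → q < pp →
        ∀ v vminus vplus : ℝ,
          v = q ^ (-1/γ) → vminus = pm ^ (-1/γ) → vplus = pp ^ (-1/γ) →
          |(v - vminus) / (q - pm) + (v - vplus) / (pp - q)
              + (1/2) * ((γ * (γ + 1) * vminus ^ (-γ - 2)) /
                  (γ * vminus ^ (-γ - 1)) ^ 2) * (vminus - vplus)|
            ≤ C * (pp - pm) ^ 2 := by
  intro r hr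
  have hγ0 : (0:ℝ) < γ := lt_trans one_pos hγ
  set e : ℝ := -1/γ with he_def
  have he : e < 0 := by
    rw [he_def]; exact div_neg_of_neg_of_pos (by norm_num) hγ0
  set a : ℝ := r/2 with ha_def
  have ha : 0 < a := by rw [ha_def]; positivity
  have hc3 : e*(e-1)*(e-2) < 0 :=
    mul_neg_of_pos_of_neg (mul_pos_of_neg_of_neg he (by linarith)) (by linarith)
  set M3 : ℝ := |e*(e-1)*(e-2)| * a^(e-3) with hM3_def
  set M2 : ℝ := |e*(e-1)| * a^(e-2) with hM2_def
  set MK : ℝ := (γ+1)/(γ*a) with hMK_def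
  clear_value M3 M2 MK
  have hM3 : 0 < M3 := by
    rw [hM3_def]
    apply mul_pos _ (Real.rpow_pos_of_pos ha _)
    rw [abs_pos]; exact hc3.ne
  have hM2 : 0 ≤ M2 := hM2_def ▸ mul_nonneg (abs_nonneg _) (Real.rpow_pos_of_pos ha _).le
  have hMK : 0 < MK := by rw [hMK_def]; positivity
  refine ⟨r, 2*M3 + (1/4)*MK*M2 + (1/2)*MK*M3*r + 1, hr, by positivity, ?_⟩
  intro pm pp q hpm hpp hq hrpm hpm2r hε hεr hpmq hqpp
  intro v vm vp hv hvm hvp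
  subst hv hvm hvp
  have hapm : a < pm := hrpm
  have hqpm : (0:ℝ) < q - pm := by linarith
  have hppq : (0:ℝ) < pp - q := by linarith
  set κ : ℝ := (γ+1)/(γ*pm) with hκ_def
  clear_value κ
  have hκpos : 0 < κ := by rw [hκ_def]; positivity
  have hκMK : κ ≤ MK := by
    rw [hκ_def, hMK_def]
    exact div_le_div_of_nonneg_left (by linarith) (by positivity)
      (mul_le_mul_of_nonneg_left hapm.le hγ0.le)
  -- coefficient simplification
  have hcoef : (γ * (γ + 1) * (pm ^ e) ^ (-γ - 2)) / (γ * (pm ^ e) ^ (-γ - 1)) ^ 2 = κ := by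
    have h1 : (pm ^ e) ^ (-γ - 2) = pm ^ (e * (-γ - 2)) := (Real.rpow_mul hpm.le _ _).symm
    have h2 : (pm ^ e) ^ (-γ - 1) = pm ^ (e * (-γ - 1)) := (Real.rpow_mul hpm.le _ _).symm
    have h3 : (pm ^ (e * (-γ - 1)))^2 = pm ^ (e*(-γ-2)) * pm := by
      rw [sq, ← Real.rpow_add hpm,
        show e*(-γ-1) + e*(-γ-1) = e*(-γ-2) + 1 by rw [he_def]; field_simp; ring,
        Real.rpow_add_one hpm.ne']
    have hX : (0:ℝ) < pm ^ (e*(-γ-2)) := Real.rpow_pos_of_pos hpm _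
    rw [h1, h2, mul_pow, h3, hκ_def]
    field_simp
  rw [hcoef]
  -- the key Taylor coefficient identity
  have hk : κ * (e * pm^(e-1)) = -(e*(e-1)*pm^(e-2)) := by
    rw [show e - 1 = (e-2) + 1 by ring, Real.rpow_add_one hpm.ne', hκ_def, he_def]
    field_simp
    ring
  rw [alg_key (q^e) (pp^e) (pm^e) (e * pm^(e-1)) (e*(e-1)*pm^(e-2)) κ q pm pp
    hqpm.ne' hppq.ne' hk]
  -- analytic estimates on s = Icc pm pp
  set s : Set ℝ := Icc pm pp with hs_def
  have hconv : Convex ℝ s := convex_Icc _ _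
  have hpos : ∀ x ∈ s, 0 < x := fun x hx => lt_of_lt_of_le hpm hx.1
  have hax : ∀ x ∈ s, a ≤ x := fun x hx => le_trans hapm.le hx.1
  have hpmS : pm ∈ s := ⟨le_refl _, by linarith⟩
  have hqS : q ∈ s := ⟨hpmq.le, hqpp.le⟩
  have hppS : pp ∈ s := ⟨by linarith, le_refl _⟩
  -- derivative of f2
  have hd2 : ∀ x ∈ s, HasDerivWithinAt (fun t => e*(e-1)*t^(e-2)) (e*(e-1)*(e-2)*x^(e-3)) s x := by
    intro x hx
    simpa [show e - 2 - 1 = e - 3 by ring] using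
      (hasDerivAt_cpow (e*(e-1)) (e-2) (hpos x hx)).hasDerivWithinAt
  have hb3 : ∀ x ∈ s, |e*(e-1)*(e-2)*x^(e-3)| ≤ M3 := by
    intro x hx
    rw [abs_mul, abs_of_pos (Real.rpow_pos_of_pos (hpos x hx) _), hM3_def]
    exact mul_le_mul_of_nonneg_left
      (Real.rpow_le_rpow_of_nonpos ha (hax x hx) (by linarith)) (abs_nonneg _)
  -- step 1: bound on f2 x - f2 pm
  have hstep1 : ∀ x ∈ s, |e*(e-1)*x^(e-2) - e*(e-1)*pm^(e-2)| ≤ M3 * (pp - pm) := by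
    intro x hx
    refine (mvt_abs hconv hd2 hb3 hpmS hx).trans ?_
    rw [abs_of_nonneg (by linarith [hx.1] : (0:ℝ) ≤ x - pm)]
    exact mul_le_mul_of_nonneg_left (by linarith [hx.2]) hM3.le
  -- step 2: bound on R'
  have hdg : ∀ x ∈ s, HasDerivWithinAt
      (fun t => e*t^(e-1) - e*pm^(e-1) - (e*(e-1)*pm^(e-2))*(t-pm))
      (e*(e-1)*x^(e-2) - e*(e-1)*pm^(e-2)) s x := by
    intro x hx
    have h1 : HasDerivWithinAt (fun t => e * t^(e-1)) (e*(e-1)*x^(e-2)) s x := by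
      simpa [show e - 1 - 1 = e - 2 by ring] using
        (hasDerivAt_cpow e (e-1) (hpos x hx)).hasDerivWithinAt
    have h2 : HasDerivWithinAt (fun t => (e*(e-1)*pm^(e-2))*(t-pm)) (e*(e-1)*pm^(e-2)) s x := by
      simpa using (((hasDerivAt_id x).sub_const pm).const_mul (e*(e-1)*pm^(e-2))).hasDerivWithinAt
    exact (h1.sub_const (e*pm^(e-1))).sub h2
  have hstep2 : ∀ x ∈ s,
      |e*x^(e-1) - e*pm^(e-1) - (e*(e-1)*pm^(e-2))*(x-pm)| ≤ M3 * (pp - pm)^2 := by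
    intro x hx
    have h0 := mvt_abs hconv hdg hstep1 hpmS hx
    simp only [sub_self, mul_zero, sub_zero] at h0
    refine h0.trans ?_
    rw [abs_of_nonneg (by linarith [hx.1] : (0:ℝ) ≤ x - pm)]
    have hxp : x - pm ≤ pp - pm := by linarith [hx.2]
    nlinarith [mul_le_mul_of_nonneg_left hxp (mul_nonneg hM3.le hε.le)]
  -- step 3: bound on R
  have hdR : ∀ x ∈ s, HasDerivWithinAt
      (fun t => t^e - pm^e - (e*pm^(e-1))*(t-pm) - (e*(e-1)*pm^(e-2))/2*(t-pm)^2)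
      (e*x^(e-1) - e*pm^(e-1) - (e*(e-1)*pm^(e-2))*(x-pm)) s x := by
    intro x hx
    have h1 : HasDerivWithinAt (fun t : ℝ => t ^ e) (e * x^(e-1)) s x :=
      (Real.hasDerivAt_rpow_const (p := e) (Or.inl (hpos x hx).ne')).hasDerivWithinAt
    have h2 : HasDerivWithinAt (fun t => (e*pm^(e-1))*(t-pm)) (e*pm^(e-1)) s x := by
      simpa using (((hasDerivAt_id x).sub_const pm).const_mul (e*pm^(e-1))).hasDerivWithinAt
    have h3 : HasDerivWithinAt (fun t => (e*(e-1)*pm^(e-2))/2*(t-pm)^2)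
        ((e*(e-1)*pm^(e-2))*(x-pm)) s x := by
      have := (((hasDerivAt_id x).sub_const pm).pow 2).const_mul ((e*(e-1)*pm^(e-2))/2)
      have heq : (e*(e-1)*pm^(e-2))/2 * (↑2 * (x - pm) ^ (2-1) * 1)
          = (e*(e-1)*pm^(e-2))*(x-pm) := by norm_num; ring
      exact (heq ▸ this).hasDerivWithinAt
    exact ((h1.sub_const (pm^e)).sub h2).sub h3
  have hstep2' : ∀ x ∈ s,
      |e*x^(e-1) - e*pm^(e-1) - (e*(e-1)*pm^(e-2))*(x-pm)| ≤ M3 * (pp - pm)^2 := hstep2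
  -- bounds on R at q, pp
  have hR0 : (fun t => t^e - pm^e - (e*pm^(e-1))*(t-pm) - (e*(e-1)*pm^(e-2))/2*(t-pm)^2) pm
      = 0 := by simp
  have hRq : |q^e - pm^e - (e*pm^(e-1))*(q-pm) - (e*(e-1)*pm^(e-2))/2*(q-pm)^2|
      ≤ M3 * (pp - pm)^2 * (q - pm) := by
    have h0 := mvt_abs hconv hdR hstep2' hpmS hqS
    simp only [hR0] at h0
    rw [sub_zero, abs_of_pos hqpm] at h0
    exact h0
  have hRpp : |pp^e - pm^e - (e*pm^(e-1))*(pp-pm) - (e*(e-1)*pm^(e-2))/2*(pp-pm)^2|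
      ≤ M3 * (pp - pm)^2 * (pp - pm) := by
    have h0 := mvt_abs hconv hdR hstep2' hpmS hppS
    simp only [hR0] at h0
    rw [sub_zero, abs_of_pos hε] at h0
    exact h0
  have hRpq : |(pp^e - pm^e - (e*pm^(e-1))*(pp-pm) - (e*(e-1)*pm^(e-2))/2*(pp-pm)^2)
      - (q^e - pm^e - (e*pm^(e-1))*(q-pm) - (e*(e-1)*pm^(e-2))/2*(q-pm)^2)|
      ≤ M3 * (pp - pm)^2 * (pp - q) := by
    have h0 := mvt_abs hconv hdR hstep2' hqS hppS
    rw [abs_of_pos hppq] at h0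
    exact h0
  -- bound on F2 and κ
  have hF2b : |e*(e-1)*pm^(e-2)| ≤ M2 := by
    rw [abs_mul, abs_of_pos (Real.rpow_pos_of_pos hpm _), hM2_def]
    exact mul_le_mul_of_nonneg_left
      (Real.rpow_le_rpow_of_nonpos ha hapm.le (by linarith)) (abs_nonneg _)
  -- final assembly
  set Rq : ℝ := q^e - pm^e - (e*pm^(e-1))*(q-pm) - (e*(e-1)*pm^(e-2))/2*(q-pm)^2 with hRq_def
  set Rp : ℝ := pp^e - pm^e - (e*pm^(e-1))*(pp-pm) - (e*(e-1)*pm^(e-2))/2*(pp-pm)^2 with hRp_def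
  clear_value Rq Rp
  have habs : |Rq/(q-pm) - (Rp - Rq)/(pp-q)
        - (1/4)*κ*(e*(e-1)*pm^(e-2))*(pp-pm)^2 - (1/2)*κ*Rp|
      ≤ |Rq|/(q-pm) + |Rp - Rq|/(pp-q)
        + (1/4)*κ * |e*(e-1)*pm^(e-2)| * (pp-pm)^2 + (1/2)*κ * |Rp| := by
    have t1 : |Rq/(q-pm)| = |Rq|/(q-pm) := by
      rw [abs_div, abs_of_pos hqpm]
    have t2 : |(Rp - Rq)/(pp-q)| = |Rp - Rq|/(pp-q) := by
      rw [abs_div, abs_of_pos hppq]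
    have t3 : |(1/4)*κ*(e*(e-1)*pm^(e-2))*(pp-pm)^2|
        = (1/4)*κ * |e*(e-1)*pm^(e-2)| * (pp-pm)^2 := by
      rw [abs_mul, abs_of_nonneg (sq_nonneg (pp-pm)), abs_mul, abs_mul, abs_of_pos hκpos]
      norm_num
    have t4 : |(1/2)*κ*Rp| = (1/2)*κ * |Rp| := by
      rw [abs_mul, abs_mul, abs_of_pos hκpos]; norm_num
    have u1 := abs_sub (Rq/(q-pm) - (Rp - Rq)/(pp-q) - (1/4)*κ*(e*(e-1)*pm^(e-2))*(pp-pm)^2) ((1/2)*κ*Rp)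
    have u2 := abs_sub (Rq/(q-pm) - (Rp - Rq)/(pp-q)) ((1/4)*κ*(e*(e-1)*pm^(e-2))*(pp-pm)^2)
    have u3 := abs_sub (Rq/(q-pm)) ((Rp - Rq)/(pp-q))
    linarith [u1, u2, u3, t1, t2, t3, t4]
  refine habs.trans ?_
  have b1 : |Rq|/(q-pm) ≤ M3 * (pp-pm)^2 :=
    (div_le_iff₀ hqpm).2 hRq
  have b2 : |Rp - Rq|/(pp-q) ≤ M3 * (pp-pm)^2 :=
    (div_le_iff₀ hppq).2 hRpq
  have b3 : (1/4)*κ * |e*(e-1)*pm^(e-2)| * (pp-pm)^2 ≤ (1/4)*MK*M2*(pp-pm)^2 := by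
    have h1 : κ * |e*(e-1)*pm^(e-2)| ≤ MK*M2 :=
      mul_le_mul hκMK hF2b (abs_nonneg _) hMK.le
    have h2 := mul_le_mul_of_nonneg_right h1 (sq_nonneg (pp-pm))
    linarith
  have b4 : (1/2)*κ * |Rp| ≤ (1/2)*MK*M3*r*(pp-pm)^2 := by
    have h1 : |Rp| ≤ M3 * (pp-pm)^2 * r := by
      refine hRpp.trans ?_
      exact mul_le_mul_of_nonneg_left hεr.le (mul_nonneg hM3.le (sq_nonneg _))
    have h2 : κ * |Rp| ≤ MK*(M3*(pp-pm)^2*r) :=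
      mul_le_mul hκMK h1 (abs_nonneg _) hMK.le
    linarith
  linarith [sq_nonneg (pp-pm)]
end

section
/- Let σ₁ < 0 < σ₂, ε₁, ε₂ > 0, C₀, c₀ > 0, and v_m ∈ ℝ. Let ṽ₁, ṽ₂ : ℝ → ℝ be differentiable functions such that for all y ∈ ℝ and i = 1, 2: |ṽᵢ'(y)| ≤ C₀ εᵢ² exp(−c₀ εᵢ |y|); 0 ≤ ṽ₁(y) − v_m ≤ C₀ ε₁ for all y, with in addition ṽ₁(y) − v_m ≤ C₀ ε₁ exp(−c₀ ε₁ |y|) for all y ≥ 0; and 0 ≤ ṽ₂(y) − v_m ≤ C₀ ε₂ for all y, with in addition ṽ₂(y) − v_m ≤ C₀ ε₂ exp(−c₀ ε₂ |y|) for all y ≤ 0. Let X₁, X₂ : (0,∞) → ℝ satisfy the separation property X₁(t) + σ₁ t ≤ σ₁ t/2 and X₂(t) + σ₂ t ≥ σ₂ t/2 for all t > 0. Then there exist constants C, c > 0, depending only on C₀, c₀, σ₁, σ₂, such that for every t > 0 and each i = 1, 2: ∫_ℝ |ṽᵢ'(x − σᵢ t − Xᵢ(t))| · |ṽ(t,x)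 − ṽᵢ(x − σᵢ t − Xᵢ(t))| dx ≤ C ε₁ ε₂ exp(−c · min(ε₁, ε₂) · t), where ṽ(t,x) := ṽ₁(x − σ₁ t − X₁(t)) + ṽ₂(x − σ₂ t − X₂(t)) − v_m. -/
/-!
Both integrands are a product of a profile derivative, which decays like `exp (-c₀ εᵢ |yᵢ|)`
around its own shock, and the deviation `ṽⱼ - v_m` of the other profile. The shifted shocks
are at distance at least `(σ₂ - σ₁) t / 2`, so at every point either the derivative is taken at
distance `≥ (σ₂ - σ₁) t / 4` from its shock, or the other profile is evaluated at distance
`≥ (σ₂ - σ₁) t / 4` on its decaying side. Either way one factor gains `exp (-c min(ε₁, ε₂) t)`,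
while half of the derivative's decay is kept to make the integral converge, at the price `1/εᵢ`.
-/

open MeasureTheory Real Set

lemma integral_exp_neg_mul_abs {a : ℝ} (ha : 0 < a) : ∫ x, exp (-(a * |x|)) = 2 / a := by
  rw [integral_comp_abs (f := fun x => exp (-(a * x)))]
  have h := integral_exp_mul_Ioi (a := -a) (by linarith) 0
  simp only [neg_mul, mul_zero, exp_zero] at h ⊢
  rw [h]
  field_simp

lemma integrable_exp_neg_mul_abs {a : ℝ} (ha : 0 < a) :
    Integrable (fun x : ℝ => exp (-(a * |x|))) :=
  .of_integral_ne_zero (by rw [integral_exp_neg_mul_abs ha]; positivity)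

lemma lintegral_ofReal_le_of_le_mul_exp_neg_abs {f : ℝ → ℝ} {M a : ℝ} (s : ℝ) (ha : 0 < a)
    (hM : 0 ≤ M) (hf : ∀ x, f x ≤ M * exp (-(a * |x - s|))) :
    ∫⁻ x, ENNReal.ofReal (f x) ≤ ENNReal.ofReal (2 * M / a) := by
  have hint : Integrable (fun x => M * exp (-(a * |x - s|))) :=
    ((integrable_exp_neg_mul_abs ha).comp_sub_right s).const_mul M
  calc ∫⁻ x, ENNReal.ofReal (f x)
      ≤ ∫⁻ x, ENNReal.ofReal (M * exp (-(a * |x - s|))) :=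
        lintegral_mono fun x => ENNReal.ofReal_le_ofReal (hf x)
    _ = ENNReal.ofReal (∫ x, M * exp (-(a * |x - s|))) :=
        (ofReal_integral_eq_lintegral_ofReal hint (ae_of_all _ fun _ => by positivity)).symm
    _ = ENNReal.ofReal (2 * M / a) := by
        rw [integral_const_mul, integral_sub_right_eq_self (fun y => exp (-(a * |y|))),
          integral_exp_neg_mul_abs ha]
        ring_nf

lemma abs_mul_abs_le_of_far {p q A B κ b r y : ℝ} (hκ : 0 ≤ κ) (hb : 0 ≤ b) (hr : 0 ≤ r)
    (hB : 0 ≤ B) (hp : |p| ≤ A * exp (-(κ * |y|))) (hq : |q| ≤ B)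
    (hfar : |y| < r → |q| ≤ B * exp (-(b * r))) :
    |p| * |q| ≤ A * B * exp (-(min κ b * r / 2)) * exp (-(κ / 2 * |y|)) := by
  set e := exp (-(κ / 2 * |y|))
  set E := exp (-(min κ b * r / 2))
  have hA : 0 ≤ A := nonneg_of_mul_nonneg_left ((abs_nonneg p).trans hp) (exp_pos _)
  have hp' : |p| ≤ A * e * e := by
    rwa [mul_assoc, ← exp_add, show -(κ / 2 * |y|) + -(κ / 2 * |y|) = -(κ * |y|) by ring]
  have he : e ≤ 1 := exp_le_one_iff.mpr (by have := abs_nonneg y; nlinarith)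
  have hpq : (|p| ≤ A * e * E ∧ |q| ≤ B) ∨ (|p| ≤ A * e ∧ |q| ≤ B * E) := by
    rcases le_or_gt r |y| with hy | hy
    · have heE : e ≤ E := exp_le_exp.mpr (neg_le_neg (by nlinarith [min_le_left κ b]))
      exact .inl ⟨hp'.trans (by gcongr), hq⟩
    · have hbE : exp (-(b * r)) ≤ E :=
        exp_le_exp.mpr (neg_le_neg (by nlinarith [min_le_right κ b]))
      exact .inr ⟨hp'.trans (mul_le_of_le_one_right (by positivity) he),
        (hfar hy).trans (by gcongr)⟩
  rcases hpq with ⟨hp'', hq''⟩ | ⟨hp'', hq''⟩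
  · calc |p| * |q| ≤ (A * e * E) * B := mul_le_mul hp'' hq'' (abs_nonneg _) (by positivity)
      _ = A * B * E * e := by ring
  · calc |p| * |q| ≤ (A * e) * (B * E) := mul_le_mul hp'' hq'' (abs_nonneg _) (by positivity)
      _ = A * B * E * e := by ring

lemma lintegral_abs_mul_abs_le_of_far {P Q : ℝ → ℝ} {A B κ b r s : ℝ} (hκ : 0 < κ)
    (hb : 0 ≤ b) (hr : 0 ≤ r) (hB : 0 ≤ B) (hP : ∀ x, |P x| ≤ A * exp (-(κ * |x - s|)))
    (hQ : ∀ x, |Q x| ≤ B) (hfar : ∀ x, |x - s| < r → |Q x| ≤ B * exp (-(b * r))) :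
    ∫⁻ x, ENNReal.ofReal (|P x| * |Q x|)
      ≤ ENNReal.ofReal (4 * A * B / κ * exp (-(min κ b * r / 2))) := by
  have hA : 0 ≤ A := nonneg_of_mul_nonneg_left ((abs_nonneg _).trans (hP 0)) (exp_pos _)
  refine (lintegral_ofReal_le_of_le_mul_exp_neg_abs (M := A * B * exp (-(min κ b * r / 2))) s
    (half_pos hκ) (by positivity)
    fun x => abs_mul_abs_le_of_far hκ.le hb hr hB (hP x) (hQ x) (hfar x)).trans_eq ?_
  congr 1
  field_simp
  ring

/-- Lemma 5.4 (estimate (5.16)) of the paper: the interaction between each shifted shock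
profile and the composite wave decays exponentially in time, thanks to the separation of
the shifts. -/
theorem wave_interaction_composite
    (σ₁ σ₂ C₀ c₀ : ℝ) (hσ₁ : σ₁ < 0) (hσ₂ : 0 < σ₂) (hC₀ : 0 < C₀) (hc₀ : 0 < c₀) :
    ∃ C c : ℝ, 0 < C ∧ 0 < c ∧
      ∀ ε₁ ε₂ : ℝ, 0 < ε₁ → 0 < ε₂ →
      ∀ vm : ℝ, ∀ tv₁ tv₂ : ℝ → ℝ,
        Differentiable ℝ tv₁ → Differentiable ℝ tv₂ →
        (∀ y, |deriv tv₁ y| ≤ C₀ * ε₁ ^ 2 * Real.exp (-(c₀ * ε₁ * |y|))) →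
        (∀ y, |deriv tv₂ y| ≤ C₀ * ε₂ ^ 2 * Real.exp (-(c₀ * ε₂ * |y|))) →
        (∀ y, 0 ≤ tv₁ y - vm) → (∀ y, tv₁ y - vm ≤ C₀ * ε₁) →
        (∀ y, 0 ≤ y → tv₁ y - vm ≤ C₀ * ε₁ * Real.exp (-(c₀ * ε₁ * |y|))) →
        (∀ y, 0 ≤ tv₂ y - vm) → (∀ y, tv₂ y - vm ≤ C₀ * ε₂) →
        (∀ y, y ≤ 0 → tv₂ y - vm ≤ C₀ * ε₂ * Real.exp (-(c₀ * ε₂ * |y|))) →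
        ∀ X₁ X₂ : ℝ → ℝ,
          (∀ t, 0 < t → X₁ t + σ₁ * t ≤ σ₁ * t / 2) →
          (∀ t, 0 < t → σ₂ * t / 2 ≤ X₂ t + σ₂ * t) →
          ∀ t, 0 < t →
            ((∫⁻ x : ℝ, ENNReal.ofReal (|deriv tv₁ (x - σ₁ * t - X₁ t)| *
                  |(tv₁ (x - σ₁ * t - X₁ t) + tv₂ (x - σ₂ * t - X₂ t) - vm)
                    - tv₁ (x - σ₁ * t - X₁ t)|))
              ≤ ENNReal.ofReal (C * ε₁ * ε₂ * Real.exp (-(c * min ε₁ ε₂ * t)))) ∧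
            ((∫⁻ x : ℝ, ENNReal.ofReal (|deriv tv₂ (x - σ₂ * t - X₂ t)| *
                  |(tv₁ (x - σ₁ * t - X₁ t) + tv₂ (x - σ₂ * t - X₂ t) - vm)
                    - tv₂ (x - σ₂ * t - X₂ t)|))
              ≤ ENNReal.ofReal (C * ε₁ * ε₂ * Real.exp (-(c * min ε₁ ε₂ * t)))) := by
  have hσ : 0 < σ₂ - σ₁ := by linarith
  refine ⟨4 * C₀ ^ 2 / c₀, c₀ * (σ₂ - σ₁) / 8, by positivity, by positivity, ?_⟩
  intro ε₁ ε₂ hε₁ hε₂ vm tv₁ tv₂ _ _ hd₁ hd₂ h₁nn h₁ub h₁dec h₂nn h₂ub h₂dec X₁ X₂ hX₁ hX₂ t ht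
  set r := (σ₂ - σ₁) * t / 4 with hr_def
  have hr : 0 ≤ r := by positivity
  have hsep : ∀ x, 2 * r ≤ (x - σ₁ * t - X₁ t) - (x - σ₂ * t - X₂ t) := fun x => by
    linarith [hX₁ t ht, hX₂ t ht]
  have hrate : min (c₀ * ε₁) (c₀ * ε₂) * r / 2 = c₀ * (σ₂ - σ₁) / 8 * min ε₁ ε₂ * t := by
    rw [← mul_min_of_nonneg _ _ hc₀.le]; ring
  constructor
  · refine (lintegral_abs_mul_abs_le_of_far (A := C₀ * ε₁ ^ 2) (B := C₀ * ε₂) (κ := c₀ * ε₁)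
      (b := c₀ * ε₂) (s := σ₁ * t + X₁ t) (by positivity) (by positivity) hr (by positivity)
      (fun x => by simpa only [sub_sub] using hd₁ _) (fun x => ?_) (fun x hx => ?_)).trans_eq ?_
    · rw [add_sub_assoc, add_sub_cancel_left, abs_of_nonneg (h₂nn _)]
      exact h₂ub _
    · have hy : x - σ₂ * t - X₂ t ≤ -r := by linarith [hsep x, (abs_lt.mp hx).2]
      rw [add_sub_assoc, add_sub_cancel_left, abs_of_nonneg (h₂nn _)]
      refine (h₂dec _ (by linarith)).trans ?_
      gcongr
      exact le_abs.mpr (.inr (by linarith))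
    · rw [hrate]
      congr 2
      field_simp
  · refine (lintegral_abs_mul_abs_le_of_far (A := C₀ * ε₂ ^ 2) (B := C₀ * ε₁) (κ := c₀ * ε₂)
      (b := c₀ * ε₁) (s := σ₂ * t + X₂ t) (by positivity) (by positivity) hr (by positivity)
      (fun x => by simpa only [sub_sub] using hd₂ _) (fun x => ?_) (fun x hx => ?_)).trans_eq ?_
    · rw [add_sub_right_comm, add_sub_cancel_right, abs_of_nonneg (h₁nn _)]
      exact h₁ub _
    · have hy : r ≤ x - σ₁ * t - X₁ t := by linarith [hsep x, (abs_lt.mp hx).1]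
      rw [add_sub_right_comm, add_sub_cancel_right, abs_of_nonneg (h₁nn _)]
      refine (h₁dec _ (by linarith)).trans ?_
      gcongr
      exact le_abs.mpr (.inl hy)
    · rw [min_comm, hrate]
      congr 2
      field_simp
end

section
/- Let σ₁ < 0 < σ₂, ε₁, ε₂ > 0, and C₀, c₀ > 0. Let ṽ₁, ṽ₂ : ℝ → ℝ be differentiable functions such that |ṽᵢ'(y)| ≤ C₀ εᵢ² exp(−c₀ εᵢ |y|) for all y ∈ ℝ and i = 1, 2. Let X₁, X₂ : (0,∞) → ℝ satisfy the separation property X₁(t) + σ₁ t ≤ σ₁ t/2 and X₂(t) + σ₂ t ≥ σ₂ t/2 for all t > 0. For each t > 0 define the Lipschitz cutoff φ_{1,t} : ℝ → [0,1] by φ_{1,t}(x) = 1 for x ≤ (X₁(t) + σ₁ t)/2, φ_{1,t}(x) = 0 for x ≥ (X₂(t) + σ₂ t)/2, and affine in between, and set φ_{2,t} := 1 − φ_{1,t}. Then there exist constants C, c > 0, depending only on C₀, c₀, σ₁, σ₂, such that for every t > 0: ∫_ℝ |ṽ₁'(x − σ₁ t − X₁(t))| φ_{2,t}(x) dx ≤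 C ε₁ exp(−c ε₁ t) and ∫_ℝ |ṽ₂'(x − σ₂ t − X₂(t))| φ_{1,t}(x) dx ≤ C ε₂ exp(−c ε₂ t). -/
open MeasureTheory Real Set

/-- The Lipschitz cutoff which equals `1` for `x ≤ A`, `0` for `x ≥ B`, and is affine in
between. -/
noncomputable def cutoff (A B x : ℝ) : ℝ :=
  if x ≤ A then 1 else if B ≤ x then 0 else (B - x) / (B - A)


open MeasureTheory Real Set

lemma int_exp_Ioi' (a A : ℝ) (ha : 0 < a) :
    ∫ x in Set.Ioi A, Real.exp (-(a * x)) = Real.exp (-(a * A)) / a := by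
  have h := integral_comp_mul_left_Ioi (fun x => Real.exp (-x)) A ha
  simp only [smul_eq_mul] at h
  rw [h, integral_exp_neg_Ioi]
  ring_nf

lemma lint_bound_right (a K A s : ℝ) (ha : 0 < a) (hK : 0 ≤ K) (g : ℝ → ℝ)
    (h0 : ∀ x, x < A → g x ≤ 0)
    (hb : ∀ x, A ≤ x → g x ≤ K * Real.exp (-(a * (x - s)))) :
    ∫⁻ x, ENNReal.ofReal (g x) ≤ ENNReal.ofReal (K * Real.exp (-(a * (A - s))) / a) := by
  have hfun : (fun x : ℝ => K * Real.exp (-(a * (x - s))))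
      = fun x => (K * Real.exp (a * s)) * Real.exp (-a * x) := by
    funext x
    rw [mul_assoc, ← Real.exp_add]
    congr 1
    ring
  have hInt : IntegrableOn (fun x => K * Real.exp (-(a * (x - s)))) (Set.Ioi A) := by
    rw [hfun]
    exact (exp_neg_integrableOn_Ioi A ha).const_mul _
  have hint : ∫ x in Set.Ioi A, K * Real.exp (-(a * (x - s)))
      = K * Real.exp (-(a * (A - s))) / a := by
    rw [hfun]
    rw [MeasureTheory.integral_const_mul]
    simp only [neg_mul]
    rw [int_exp_Ioi' a A ha]
    rw [show -(a * (A - s)) = a * s + -(a * A) by ring, Real.exp_add]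
    ring
  calc ∫⁻ x, ENNReal.ofReal (g x)
      ≤ ∫⁻ x, (Set.Ici A).indicator
          (fun x => ENNReal.ofReal (K * Real.exp (-(a * (x - s))))) x := by
        refine lintegral_mono fun x => ?_
        by_cases hx : A ≤ x
        · rw [Set.indicator_of_mem (Set.mem_Ici.mpr hx)]
          exact ENNReal.ofReal_le_ofReal (hb x hx)
        · rw [Set.indicator_of_notMem (by simpa using hx)]
          simp [ENNReal.ofReal_eq_zero.2 (h0 x (not_le.1 hx))]
    _ = ∫⁻ x in Set.Ici A, ENNReal.ofReal (K * Real.exp (-(a * (x - s)))) := by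
        rw [lintegral_indicator measurableSet_Ici]
    _ = ∫⁻ x in Set.Ioi A, ENNReal.ofReal (K * Real.exp (-(a * (x - s)))) := by
        rw [MeasureTheory.restrict_Ioi_eq_restrict_Ici]
    _ = ENNReal.ofReal (∫ x in Set.Ioi A, K * Real.exp (-(a * (x - s)))) :=
        (ofReal_integral_eq_lintegral_ofReal hInt
          (Filter.Eventually.of_forall fun x => by positivity)).symm
    _ = ENNReal.ofReal (K * Real.exp (-(a * (A - s))) / a) := by rw [hint]

lemma lint_bound_left (a K B s : ℝ) (ha : 0 < a) (hK : 0 ≤ K) (g : ℝ → ℝ)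
    (h0 : ∀ x, B < x → g x ≤ 0)
    (hb : ∀ x, x ≤ B → g x ≤ K * Real.exp (-(a * (s - x)))) :
    ∫⁻ x, ENNReal.ofReal (g x) ≤ ENNReal.ofReal (K * Real.exp (-(a * (s - B))) / a) := by
  have hmp : MeasurePreserving (fun x : ℝ => -x) volume volume :=
    Measure.measurePreserving_neg _
  have hme : MeasurableEmbedding (fun x : ℝ => -x) :=
    (Homeomorph.neg ℝ).isClosedEmbedding.measurableEmbedding
  have hcomp : ∫⁻ x, ENNReal.ofReal (g x) = ∫⁻ x, ENNReal.ofReal (g (-x)) :=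
    (hmp.lintegral_comp_emb hme fun x => ENNReal.ofReal (g x)).symm
  rw [hcomp]
  have := lint_bound_right a K (-B) (-s) ha hK (fun x => g (-x))
    (fun x hx => h0 (-x) (by linarith))
    (fun x hx => by
      have := hb (-x) (by linarith)
      simpa [show s - -x = x - -s by ring] using this)
  simpa [show -B - -s = s - B by ring] using this

lemma cutoff_nonneg (A B x : ℝ) : 0 ≤ cutoff A B x := by
  unfold cutoff
  split_ifs with h1 h2
  · norm_num
  · norm_num
  · exact div_nonneg (by push_neg at h2; linarith) (by push_neg at h1 h2; linarith)

lemma cutoff_le_one (A B x : ℝ) : cutoff A B x ≤ 1 := by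
  unfold cutoff
  split_ifs with h1 h2
  · norm_num
  · norm_num
  · push_neg at h1 h2
    rw [div_le_one (by linarith)]
    linarith

lemma cutoff_eq_one {A B x : ℝ} (h : x ≤ A) : cutoff A B x = 1 := by
  unfold cutoff; rw [if_pos h]

lemma cutoff_eq_zero {A B x : ℝ} (hA : A < x) (h : B ≤ x) : cutoff A B x = 0 := by
  unfold cutoff; rw [if_neg (not_le.2 hA), if_pos h]

/-- Lemma 6.5 of the paper: each shifted shock profile, localized by the cutoff adapted to
the other wave, decays exponentially in time. -/
theorem cutoff_localization_decay
    (σ₁ σ₂ C₀ c₀ : ℝ) (hσ₁ : σ₁ < 0) (hσ₂ : 0 < σ₂) (hC₀ : 0 < C₀) (hc₀ : 0 < c₀) :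
    ∃ C c : ℝ, 0 < C ∧ 0 < c ∧
      ∀ ε₁ ε₂ : ℝ, 0 < ε₁ → 0 < ε₂ →
      ∀ tv₁ tv₂ : ℝ → ℝ,
        Differentiable ℝ tv₁ → Differentiable ℝ tv₂ →
        (∀ y, |deriv tv₁ y| ≤ C₀ * ε₁ ^ 2 * Real.exp (-(c₀ * ε₁ * |y|))) →
        (∀ y, |deriv tv₂ y| ≤ C₀ * ε₂ ^ 2 * Real.exp (-(c₀ * ε₂ * |y|))) →
        ∀ X₁ X₂ : ℝ → ℝ,
          (∀ t, 0 < t → X₁ t + σ₁ * t ≤ σ₁ * t / 2) →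
          (∀ t, 0 < t → σ₂ * t / 2 ≤ X₂ t + σ₂ * t) →
          ∀ t, 0 < t →
            ((∫⁻ x : ℝ, ENNReal.ofReal (|deriv tv₁ (x - σ₁ * t - X₁ t)| *
                  (1 - cutoff ((X₁ t + σ₁ * t) / 2) ((X₂ t + σ₂ * t) / 2) x)))
              ≤ ENNReal.ofReal (C * ε₁ * Real.exp (-(c * ε₁ * t)))) ∧
            ((∫⁻ x : ℝ, ENNReal.ofReal (|deriv tv₂ (x - σ₂ * t - X₂ t)| *
                  cutoff ((X₁ t + σ₁ * t) / 2) ((X₂ t + σ₂ * t) / 2) x))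
              ≤ ENNReal.ofReal (C * ε₂ * Real.exp (-(c * ε₂ * t)))) := by
  set m : ℝ := min (-σ₁) σ₂ with hm_def
  have hm : 0 < m := lt_min (by linarith) hσ₂
  have hm1 : m ≤ -σ₁ := min_le_left _ _
  have hm2 : m ≤ σ₂ := min_le_right _ _
  refine ⟨C₀ / c₀, c₀ * m / 4, by positivity, by positivity, ?_⟩
  intro ε₁ ε₂ hε₁ hε₂ tv₁ tv₂ hd₁ hd₂ hb₁ hb₂ X₁ X₂ hX₁ hX₂ t ht
  set A : ℝ := (X₁ t + σ₁ * t) / 2 with hA_def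
  set B : ℝ := (X₂ t + σ₂ * t) / 2 with hB_def
  have hs₁ : X₁ t + σ₁ * t ≤ σ₁ * t / 2 := hX₁ t ht
  have hs₂ : σ₂ * t / 2 ≤ X₂ t + σ₂ * t := hX₂ t ht
  have hσ₁t : σ₁ * t < 0 := mul_neg_of_neg_of_pos hσ₁ ht
  have hσ₂t : 0 < σ₂ * t := mul_pos hσ₂ ht
  have hA0 : A < 0 := by rw [hA_def]; linarith
  have hB0 : 0 < B := by rw [hB_def]; linarith
  constructor
  · -- first integral
    refine le_trans (lint_bound_right (c₀ * ε₁) (C₀ * ε₁ ^ 2) A (σ₁ * t + X₁ t)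
      (by positivity) (by positivity) _ ?_ ?_) ?_
    · intro x hx
      rw [cutoff_eq_one hx.le]
      simp
    · intro x hx
      have hxs : 0 ≤ x - (σ₁ * t + X₁ t) := by rw [hA_def] at hx; linarith
      have h1 : 1 - cutoff A B x ≤ 1 := by linarith [cutoff_nonneg A B x]
      have h2 : 0 ≤ 1 - cutoff A B x := by linarith [cutoff_le_one A B x]
      calc |deriv tv₁ (x - σ₁ * t - X₁ t)| * (1 - cutoff A B x)
          ≤ |deriv tv₁ (x - σ₁ * t - X₁ t)| := mul_le_of_le_one_right (abs_nonneg _) h1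
        _ ≤ C₀ * ε₁ ^ 2 * Real.exp (-(c₀ * ε₁ * |x - σ₁ * t - X₁ t|)) := hb₁ _
        _ = C₀ * ε₁ ^ 2 * Real.exp (-(c₀ * ε₁ * (x - (σ₁ * t + X₁ t)))) := by
            rw [show x - σ₁ * t - X₁ t = x - (σ₁ * t + X₁ t) by ring,
              abs_of_nonneg hxs]
    · apply ENNReal.ofReal_le_ofReal
      have hAs : c₀ * m / 4 * ε₁ * t ≤ c₀ * ε₁ * (A - (σ₁ * t + X₁ t)) := by
        have h3 : m * t / 4 ≤ A - (σ₁ * t + X₁ t) := by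
          have : m * t ≤ -σ₁ * t := by nlinarith
          rw [hA_def]; nlinarith
        nlinarith [mul_pos hc₀ hε₁]
      rw [show C₀ * ε₁ ^ 2 * Real.exp (-(c₀ * ε₁ * (A - (σ₁ * t + X₁ t)))) / (c₀ * ε₁)
          = C₀ / c₀ * ε₁ * Real.exp (-(c₀ * ε₁ * (A - (σ₁ * t + X₁ t)))) by
        field_simp]
      gcongr
  · -- second integral
    refine le_trans (lint_bound_left (c₀ * ε₂) (C₀ * ε₂ ^ 2) B (σ₂ * t + X₂ t)
      (by positivity) (by positivity) _ ?_ ?_) ?_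
    · intro x hx
      rw [cutoff_eq_zero (lt_trans hA0 (lt_trans hB0 hx)) hx.le]
      simp
    · intro x hx
      have hxs : x - (σ₂ * t + X₂ t) ≤ 0 := by rw [hB_def] at hx; linarith
      calc |deriv tv₂ (x - σ₂ * t - X₂ t)| * cutoff A B x
          ≤ |deriv tv₂ (x - σ₂ * t - X₂ t)| :=
            mul_le_of_le_one_right (abs_nonneg _) (cutoff_le_one A B x)
        _ ≤ C₀ * ε₂ ^ 2 * Real.exp (-(c₀ * ε₂ * |x - σ₂ * t - X₂ t|)) := hb₂ _
        _ = C₀ * ε₂ ^ 2 * Real.exp (-(c₀ * ε₂ * (σ₂ * t + X₂ t - x))) := by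
            rw [show x - σ₂ * t - X₂ t = x - (σ₂ * t + X₂ t) by ring,
              abs_of_nonpos hxs]
            ring_nf
    · apply ENNReal.ofReal_le_ofReal
      have hAs : c₀ * m / 4 * ε₂ * t ≤ c₀ * ε₂ * (σ₂ * t + X₂ t - B) := by
        have h3 : m * t / 4 ≤ σ₂ * t + X₂ t - B := by
          have : m * t ≤ σ₂ * t := by nlinarith
          rw [hB_def]; nlinarith
        nlinarith [mul_pos hc₀ hε₂]
      rw [show C₀ * ε₂ ^ 2 * Real.exp (-(c₀ * ε₂ * (σ₂ * t + X₂ t - B))) / (c₀ * ε₂)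
          = C₀ / c₀ * ε₂ * Real.exp (-(c₀ * ε₂ * (σ₂ * t + X₂ t - B))) by
        field_simp]
      gcongr
end
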